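/- Fix an integer r ≥ 1. Let V be the set of all finite ℚ-linear combinations of the functions f_T, where T ranges over finite nonempty subsets of ℤ_{≥0}^r \ {0}. Then the set of restrictions to B of functions in V is dense in C(B,ℝ) for the uniform norm: for every continuous function f : B → ℝ and every ε > 0 there exists g ∈ V such that |f(m) − g(m)| ≤ ε for all m ∈ B. -/

import Mathlib

/-- For a finite nonempty set `T ⊆ ℤ_{≥0}^r` of integer vectors, the function
`f_T(m) = min_{α ∈ T} (α₁ m₁ + ⋯ + α_r m_r)` (written on all of `ℝ^r`;
only its restriction to the simplex matters below). -/
noncomputable def fT {r : ℕ} (T : Finset (Fin r → ℕ)) (hT : T.Nonempty) :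
    (Fin r → ℝ) → ℝ :=
  fun m => T.inf' hT fun α => ∑ i, (α i : ℝ) * m i

/-- The set of functions `f_T` for `T` a finite nonempty subset of `ℤ_{≥0}^r \ {0}`. -/
def fTSet (r : ℕ) : Set ((Fin r → ℝ) → ℝ) :=
  {f | ∃ (T : Finset (Fin r → ℕ)) (hT : T.Nonempty), (0 : Fin r → ℕ) ∉ T ∧ f = fT T hT}


/-!
Both operations on finite sets of exponent vectors are visible on the functions:
`f_{T ∪ T'} = min f_T f_{T'}` and `f_{T + T'} = f_T + f_{T'}` for the Minkowski sum.
Hence every `g` in the `ℚ`-span `V` of the `f_T` can be written `N • g = f_A - f_B`, and then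
`min g 0 = N⁻¹ • (f_{A ∪ B} - f_B)` lies in `V`; so `V` is a lattice. Its restriction to the simplex
contains the rational affine functions `p mᵢ + q` (as `f_{eᵢ} = mᵢ`, and `f_{(1,…,1)} = 1` on `B`),
so its closure is a sublattice of `C(B, ℝ)` that separates points strongly, and the lattice
version of the Stone–Weierstrass theorem applies.
-/

open Pointwise

namespace ContinuousMap

variable {α β : Type*} [TopologicalSpace α] [LocallyCompactSpace α] [TopologicalSpace β]

instance [SemilatticeInf β] [ContinuousInf β] : ContinuousInf C(α, β) :=
  ⟨continuous_of_continuous_uncurry _ <|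
    (continuous_eval.comp (continuous_fst.prodMap continuous_id)).inf
      (continuous_eval.comp (continuous_snd.prodMap continuous_id))⟩

instance [SemilatticeSup β] [ContinuousSup β] : ContinuousSup C(α, β) :=
  ⟨continuous_of_continuous_uncurry _ <|
    (continuous_eval.comp (continuous_fst.prodMap continuous_id)).sup
      (continuous_eval.comp (continuous_snd.prodMap continuous_id))⟩

instance [Lattice β] [TopologicalLattice β] : TopologicalLattice C(α, β) where

end ContinuousMap

section ClosedUnderLattice

variable {α : Type*} [TopologicalSpace α] {s : Set α}

theorem InfClosed.closure [SemilatticeInf α] [ContinuousInf α] (hs : InfClosed s) :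
    InfClosed (closure s) := fun _ ha _ hb =>
  map_mem_closure₂ (f := (· ⊓ ·)) continuous_inf ha hb fun _ ha' _ hb' => hs ha' hb'

theorem SupClosed.closure [SemilatticeSup α] [ContinuousSup α] (hs : SupClosed s) :
    SupClosed (closure s) := fun _ ha _ hb =>
  map_mem_closure₂ (f := (· ⊔ ·)) continuous_sup ha hb fun _ ha' _ hb' => hs ha' hb'

theorem IsSublattice.closure [Lattice α] [TopologicalLattice α] (hs : IsSublattice s) :
    IsSublattice (closure s) :=
  ⟨hs.supClosed.closure, hs.infClosed.closure⟩

end ClosedUnderLattice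

theorem Submodule.exists_nsmul_mem_addSubgroupClosure_of_mem_span_rat {E : Type*}
    [AddCommGroup E] [Module ℚ E] {S : Set E} {g : E} (hg : g ∈ Submodule.span ℚ S) :
    ∃ N : ℕ, 0 < N ∧ N • g ∈ AddSubgroup.closure S := by
  induction hg using Submodule.span_induction with
  | mem x hx => exact ⟨1, one_pos, by simpa using AddSubgroup.subset_closure hx⟩
  | zero => exact ⟨1, one_pos, by simp⟩
  | add x y _ _ hx hy =>
    obtain ⟨N, hN, hNx⟩ := hx
    obtain ⟨M, hM, hMy⟩ := hy
    refine ⟨N * M, Nat.mul_pos hN hM, ?_⟩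
    rw [nsmul_add, mul_nsmul x, mul_nsmul' y]
    exact add_mem (nsmul_mem hNx M) (nsmul_mem hMy N)
  | smul q x _ hx =>
    obtain ⟨N, hN, hNx⟩ := hx
    refine ⟨q.den * N, Nat.mul_pos q.den_pos hN, ?_⟩
    have : (q.den * N) • (q • x) = q.num • (N • x) := by
      rw [← Nat.cast_smul_eq_nsmul ℚ, ← Nat.cast_smul_eq_nsmul ℚ N, ← Int.cast_smul_eq_zsmul ℚ,
        smul_smul, smul_smul, Nat.cast_mul, mul_right_comm, Rat.den_mul_eq_num]
    rw [this]
    exact zsmul_mem hNx _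

theorem AddSubgroup.exists_sub_eq_of_mem_closure {G : Type*} [AddCommGroup G] {S : Set G}
    (hS : S.Nonempty) (hadd : ∀ a ∈ S, ∀ b ∈ S, a + b ∈ S) {g : G}
    (hg : g ∈ AddSubgroup.closure S) : ∃ a ∈ S, ∃ b ∈ S, a - b = g := by
  induction hg using AddSubgroup.closure_induction with
  | mem x hx => exact ⟨x + x, hadd x hx x hx, x, hx, add_sub_cancel_right x x⟩
  | zero =>
    obtain ⟨a, ha⟩ := hS
    exact ⟨a, ha, a, ha, sub_self a⟩
  | add x y _ _ hx hy =>
    obtain ⟨a, ha, b, hb, rfl⟩ := hx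
    obtain ⟨c, hc, d, hd, rfl⟩ := hy
    exact ⟨a + c, hadd a ha c hc, b + d, hadd b hb d hd, add_sub_add_comm a c b d⟩
  | neg x _ hx =>
    obtain ⟨a, ha, b, hb, rfl⟩ := hx
    exact ⟨b, hb, a, ha, (neg_sub a b).symm⟩

section RatSpan

variable {ι : Type*} {S : Set (ι → ℝ)}

theorem inf_zero_mem_span_rat (hS : S.Nonempty) (hadd : ∀ a ∈ S, ∀ b ∈ S, a + b ∈ S)
    (hinf : InfClosed S) {g : ι → ℝ} (hg : g ∈ Submodule.span ℚ S) :
    g ⊓ 0 ∈ Submodule.span ℚ S := by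
  obtain ⟨N, hN, hNg⟩ := Submodule.exists_nsmul_mem_addSubgroupClosure_of_mem_span_rat hg
  obtain ⟨a, ha, b, hb, hab⟩ := AddSubgroup.exists_sub_eq_of_mem_closure hS hadd hNg
  -- `N • (g ⊓ 0) = (a - b) ⊓ 0 = a ⊓ b - b`
  have key : g ⊓ 0 = (N : ℚ)⁻¹ • (a ⊓ b - b) := by
    have hNr : (0 : ℝ) < N := Nat.cast_pos.2 hN
    funext i
    have hi := congrFun hab i
    simp only [Pi.sub_apply, Pi.smul_apply, nsmul_eq_mul] at hi
    simp only [Pi.inf_apply, Pi.zero_apply, Pi.smul_apply, Pi.sub_apply, Rat.smul_def,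
      Rat.cast_inv, Rat.cast_natCast]
    have hmin : min ((N : ℝ) * g i) 0 = N * min (g i) 0 := by
      rw [mul_min_of_nonneg _ _ hNr.le, mul_zero]
    rw [← min_sub_sub_right, sub_self, hi, hmin, inv_mul_cancel_left₀ hNr.ne']
  rw [key]
  exact Submodule.smul_mem _ _ (Submodule.sub_mem _
    (Submodule.subset_span (hinf ha hb)) (Submodule.subset_span hb))

theorem isSublattice_span_rat (hS : S.Nonempty) (hadd : ∀ a ∈ S, ∀ b ∈ S, a + b ∈ S)
    (hinf : InfClosed S) : IsSublattice (Submodule.span ℚ S : Set (ι → ℝ)) := by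
  have inf_mem : InfClosed (Submodule.span ℚ S : Set (ι → ℝ)) := fun g hg h hh => by
    have : g ⊓ h = (g - h) ⊓ 0 + h := by
      funext i
      simp only [Pi.inf_apply, Pi.add_apply, Pi.sub_apply, Pi.zero_apply, ← min_add_add_right,
        sub_add_cancel, zero_add]
    rw [this]
    exact add_mem (inf_zero_mem_span_rat hS hadd hinf (sub_mem hg hh)) hh
  refine ⟨fun g hg h hh => ?_, inf_mem⟩
  rw [eq_sub_of_add_eq' (inf_add_sup g h)]
  exact sub_mem (add_mem hg hh) (inf_mem hg hh)

end RatSpan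

section Restriction

variable {α : Type*} [TopologicalSpace α] {X : Set α}

theorem isSublattice_setOf_restrict {V : Set (α → ℝ)} (hV : IsSublattice V) :
    IsSublattice {φ : C(X, ℝ) | ∃ g ∈ V, ∀ x : X, φ x = g x} := by
  constructor
  · rintro φ ⟨g, hg, hφ⟩ ψ ⟨h, hh, hψ⟩
    exact ⟨g ⊔ h, hV.supClosed hg hh, fun x => by simp [hφ, hψ]⟩
  · rintro φ ⟨g, hg, hφ⟩ ψ ⟨h, hh, hψ⟩
    exact ⟨g ⊓ h, hV.infClosed hg hh, fun x => by simp [hφ, hψ]⟩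

end Restriction

section SkeletalFunctions

variable {r : ℕ}

theorem fT_union {T T' : Finset (Fin r → ℕ)} (hT : T.Nonempty) (hT' : T'.Nonempty) :
    fT (T ∪ T') (hT.mono Finset.subset_union_left) = fT T hT ⊓ fT T' hT' :=
  funext fun _ => Finset.inf'_union hT hT' _

theorem fT_add {T T' : Finset (Fin r → ℕ)} (hT : T.Nonempty) (hT' : T'.Nonempty) :
    fT (T + T') (hT.add hT') = fT T hT + fT T' hT' := by
  funext m
  have pairing_add : ∀ α β : Fin r → ℕ,
      ∑ i, ((α + β) i : ℝ) * m i = ∑ i, (α i : ℝ) * m i + ∑ i, (β i : ℝ) * m i := fun α β => by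
    simp only [Pi.add_apply, Nat.cast_add, add_mul, Finset.sum_add_distrib]
  apply le_antisymm
  · obtain ⟨α, hα, hαm⟩ := Finset.exists_mem_eq_inf' hT fun α => ∑ i, (α i : ℝ) * m i
    obtain ⟨β, hβ, hβm⟩ := Finset.exists_mem_eq_inf' hT' fun α => ∑ i, (α i : ℝ) * m i
    simp only [Pi.add_apply, fT]
    rw [hαm, hβm, ← pairing_add]
    exact Finset.inf'_le _ (Finset.add_mem_add hα hβ)
  · refine Finset.le_inf' _ _ fun γ hγ => ?_
    obtain ⟨α, hα, β, hβ, rfl⟩ := Finset.mem_add.1 hγ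
    rw [pairing_add]
    exact add_le_add (Finset.inf'_le _ hα) (Finset.inf'_le _ hβ)

theorem fT_singleton (α : Fin r → ℕ) :
    fT {α} (Finset.singleton_nonempty α) = fun m => ∑ i, (α i : ℝ) * m i :=
  funext fun _ => Finset.inf'_singleton _

theorem add_mem_fTSet {f g : (Fin r → ℝ) → ℝ} (hf : f ∈ fTSet r) (hg : g ∈ fTSet r) :
    f + g ∈ fTSet r := by
  obtain ⟨T, hT, h0, rfl⟩ := hf
  obtain ⟨T', hT', -, rfl⟩ := hg
  refine ⟨T + T', hT.add hT', fun h => ?_, (fT_add hT hT').symm⟩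
  obtain ⟨α, hα, β, -, hαβ⟩ := Finset.mem_add.1 h
  exact h0 ((add_eq_zero.1 hαβ).1 ▸ hα)

theorem infClosed_fTSet : InfClosed (fTSet r) := by
  rintro _ ⟨T, hT, h0, rfl⟩ _ ⟨T', hT', h0', rfl⟩
  exact ⟨T ∪ T', _, by simp [h0, h0'], (fT_union hT hT').symm⟩

theorem coord_mem_fTSet (j : Fin r) : (fun m : Fin r → ℝ => m j) ∈ fTSet r := by
  refine ⟨{Pi.single j 1}, Finset.singleton_nonempty _, ?_, ?_⟩
  · simp [eq_comm]
  · simp [fT_singleton, Pi.single_apply]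

theorem sum_mem_fTSet [Nonempty (Fin r)] : (fun m : Fin r → ℝ => ∑ i, m i) ∈ fTSet r := by
  refine ⟨{1}, Finset.singleton_nonempty _, ?_, ?_⟩
  · simp
  · simp [fT_singleton]

end SkeletalFunctions

theorem smul_add_smul_mem_closure_of_rat {E : Type*} [AddCommGroup E] [Module ℝ E]
    [TopologicalSpace E] [ContinuousAdd E] [ContinuousSMul ℝ E] {L : Set E} (u v : E)
    (h : ∀ p q : ℚ, (p : ℝ) • u + (q : ℝ) • v ∈ L) (a b : ℝ) : a • u + b • v ∈ closure L :=
  map_mem_closure₂ (f := fun a b : ℝ => a • u + b • v) (by fun_prop)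
    (Rat.denseRange_cast a) (Rat.denseRange_cast b) (by rintro _ ⟨p, rfl⟩ _ ⟨q, rfl⟩; exact h p q)

theorem separatesPointsStrongly_of_affine_mem {ι : Type*} [Nonempty ι] {X : Set (ι → ℝ)}
    {M : Set C(X, ℝ)}
    (hM : ∀ (i : ι) (a b : ℝ), a • (ContinuousMap.eval i).restrict X + b • 1 ∈ M) :
    M.SeparatesPointsStrongly := by
  intro v x y
  by_cases hxy : x = y
  · subst hxy
    exact ⟨_, hM (Classical.arbitrary ι) 0 (v x), by simp, by simp⟩
  · obtain ⟨i, hi⟩ : ∃ i, (x : ι → ℝ) i ≠ (y : ι → ℝ) i := by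
      contrapose! hxy
      exact Subtype.ext (funext hxy)
    have hd : (x : ι → ℝ) i - (y : ι → ℝ) i ≠ 0 := sub_ne_zero.2 hi
    set a := (v x - v y) / ((x : ι → ℝ) i - (y : ι → ℝ) i)
    refine ⟨_, hM i a (v x - a * (x : ι → ℝ) i), by simp, ?_⟩
    simp only [ContinuousMap.add_apply, ContinuousMap.smul_apply, ContinuousMap.restrict_apply,
      ContinuousMap.eval_apply, ContinuousMap.one_apply, smul_eq_mul, mul_one, a]
    field_simp
    ring

theorem rat_affine_mem_restrict_span_fTSet {r : ℕ} [Nonempty (Fin r)] (i : Fin r) (p q : ℚ) :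
    (p : ℝ) • (ContinuousMap.eval i).restrict (stdSimplex ℝ (Fin r)) + (q : ℝ) • 1 ∈
      {φ : C(stdSimplex ℝ (Fin r), ℝ) | ∃ g ∈ Submodule.span ℚ (fTSet r), ∀ x, φ x = g x} :=
  ⟨p • (fun m => m i) + q • (fun m => ∑ j, m j),
    add_mem (Submodule.smul_mem _ p (Submodule.subset_span (coord_mem_fTSet i)))
      (Submodule.smul_mem _ q (Submodule.subset_span sum_mem_fTSet)),
    fun x => by
      simp only [ContinuousMap.add_apply, ContinuousMap.smul_apply, ContinuousMap.restrict_apply,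
        ContinuousMap.eval_apply, ContinuousMap.one_apply, Pi.add_apply, Pi.smul_apply,
        Rat.smul_def, smul_eq_mul, mul_one, stdSimplex.sum_eq_one]
      -- the two sides use the `Subtype.val` and the `FunLike` coercions of `stdSimplex`
      rfl⟩

/-- **Density of skeletal functions of model special divisors.**
The restrictions to the standard simplex `B` of the ℚ-linear combinations of the
functions `f_T` are dense in `C(B, ℝ)` for the uniform norm: for every continuous
`f : B → ℝ` and every `ε > 0` there is `g` in the ℚ-span with
`|f(m) − g(m)| ≤ ε` for all `m ∈ B`. -/
theorem span_fT_dense_on_simplex {r : ℕ} (hr : 1 ≤ r)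
    (f : (Fin r → ℝ) → ℝ) (hf : ContinuousOn f (stdSimplex ℝ (Fin r)))
    (ε : ℝ) (hε : 0 < ε) :
    ∃ g ∈ Submodule.span ℚ (fTSet r), ∀ m ∈ stdSimplex ℝ (Fin r), |f m - g m| ≤ ε := by
  have : Nonempty (Fin r) := ⟨⟨0, hr⟩⟩
  set X := stdSimplex ℝ (Fin r)
  have : CompactSpace X := isCompact_iff_compactSpace.1 (isCompact_stdSimplex _ _)
  set L := {φ : C(X, ℝ) | ∃ g ∈ Submodule.span ℚ (fTSet r), ∀ x, φ x = g x}
  have hL : IsSublattice (closure L) :=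
    (isSublattice_setOf_restrict (isSublattice_span_rat ⟨_, coord_mem_fTSet ⟨0, hr⟩⟩
      (fun _ ha _ hb => add_mem_fTSet ha hb) infClosed_fTSet)).closure
  have haffine : ∀ (i : Fin r) (a b : ℝ),
      a • (ContinuousMap.eval i).restrict X + b • 1 ∈ closure L := fun i =>
    smul_add_smul_mem_closure_of_rat _ _ (rat_affine_mem_restrict_span_fTSet i)
  have hdense := ContinuousMap.sublattice_closure_eq_top _ ⟨_, haffine ⟨0, hr⟩ 0 0⟩
    hL.infClosed hL.supClosed (separatesPointsStrongly_of_affine_mem haffine)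
  rw [closure_closure] at hdense
  set F : C(X, ℝ) := ⟨X.domRestrict f, hf.domRestrict⟩
  obtain ⟨φ, ⟨g, hg, hφg⟩, hFφ⟩ := Metric.mem_closure_iff.1 (by simp [hdense] : F ∈ closure L) ε hε
  refine ⟨g, hg, fun m hm => ?_⟩
  have := (ContinuousMap.dist_apply_le_dist (f := F) ⟨m, hm⟩).trans hFφ.le
  rwa [hφg, Real.dist_eq] at this
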